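/- In particular, for i.i.d. X_1,...,X_n with E[|X_1|^\alpha] < \infty for some \alpha \in (1,2), the expected Wasserstein-1 distance between the empirical distribution and the true distribution tends to 0 as n \to \infty. -/

import Mathlib

/-!
For fixed `x`, `F_n(x)` is the sample mean of the i.i.d. indicators `1(X_i ≤ x)`, so the
`L¹` law of large numbers gives `E|F_n(x) - F(x)| → 0`. Since `F_n(x) ∈ [0, 1]` has mean `F(x)`,
also `E|F_n(x) - F(x)| ≤ 2 min(F(x), 1 - F(x))`, and Markov's inequality for the weight
`(1 + |X|)^α` bounds this by `C (1 + |x|)^(-α)`, which is integrable because `α > 1`.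
Dominated convergence in `x`, after exchanging the two integrals, gives the claim.
-/

open MeasureTheory ProbabilityTheory Filter

noncomputable def cdfFun (μ : Measure ℝ) (x : ℝ) : ℝ := (μ (Set.Iic x)).toReal

noncomputable def empCDF {Ω : Type*} (n : ℕ) (X : ℕ → Ω → ℝ) (ω : Ω) (x : ℝ) : ℝ :=
  (1 / n : ℝ) * ∑ i ∈ Finset.range n, (if X i ω ≤ x then (1 : ℝ) else 0)

open Set Topology

lemma cdfFun_eq_cdf (μ : Measure ℝ) [IsProbabilityMeasure μ] : cdfFun μ = cdf μ := by
  ext x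
  rw [cdf_eq_real, measureReal_def, cdfFun]

lemma measurable_cdfFun (μ : Measure ℝ) [IsProbabilityMeasure μ] : Measurable (cdfFun μ) := by
  rw [cdfFun_eq_cdf]
  exact (cdf μ).mono.measurable

lemma one_sub_cdfFun (μ : Measure ℝ) [IsProbabilityMeasure μ] (x : ℝ) :
    1 - cdfFun μ x = μ.real (Ioi x) := by
  rw [← compl_Iic, probReal_compl_eq_one_sub measurableSet_Iic, cdfFun, measureReal_def]

lemma min_cdfFun_le_measureReal_abs_le (μ : Measure ℝ) [IsProbabilityMeasure μ] (x : ℝ) :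
    min (cdfFun μ x) (1 - cdfFun μ x) ≤ μ.real {y | |x| ≤ |y|} := by
  rcases le_total x 0 with hx | hx
  · refine (min_le_left _ _).trans (measureReal_mono fun y (hy : y ≤ x) => ?_)
    simp only [mem_ofPred_eq, abs_of_nonpos hx, abs_of_nonpos (hy.trans hx)]
    linarith
  · rw [one_sub_cdfFun]
    refine (min_le_right _ _).trans (measureReal_mono fun y (hy : x < y) => ?_)
    simp only [mem_ofPred_eq, abs_of_nonneg hx, abs_of_nonneg (hx.trans hy.le)]
    exact hy.le

lemma min_cdfFun_le_integral_mul_rpow_neg (μ : Measure ℝ) [IsProbabilityMeasure μ] {α : ℝ}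
    (hα : 0 ≤ α) (hmom : Integrable (fun y => (1 + |y|) ^ α) μ) (x : ℝ) :
    min (cdfFun μ x) (1 - cdfFun μ x) ≤ (∫ y, (1 + |y|) ^ α ∂μ) * (1 + |x|) ^ (-α) := by
  have hpos : 0 < (1 + |x|) ^ α := by positivity
  have hmarkov := mul_meas_ge_le_integral_of_nonneg
    (Eventually.of_forall fun y => by positivity) hmom ((1 + |x|) ^ α)
  have hsub : {y | |x| ≤ |y|} ⊆ {y | (1 + |x|) ^ α ≤ (1 + |y|) ^ α} := fun y hy =>
    Real.rpow_le_rpow (by positivity) (by simpa using hy) hα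
  rw [Real.rpow_neg (by positivity), ← div_eq_mul_inv, le_div_iff₀ hpos]
  calc min (cdfFun μ x) (1 - cdfFun μ x) * (1 + |x|) ^ α
      ≤ μ.real {y | (1 + |x|) ^ α ≤ (1 + |y|) ^ α} * (1 + |x|) ^ α := by
        gcongr
        exact (min_cdfFun_le_measureReal_abs_le μ x).trans (measureReal_mono hsub)
    _ ≤ ∫ y, (1 + |y|) ^ α ∂μ := by rwa [mul_comm]

lemma integrable_one_add_abs_rpow_map {Ω : Type*} [MeasurableSpace Ω] {P : Measure Ω}
    [IsFiniteMeasure P] {Y : Ω → ℝ} (hY : Measurable Y) {α : ℝ} (hα : 0 < α)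
    (hmom : Integrable (fun ω => |Y ω| ^ α) P) :
    Integrable (fun y => (1 + |y|) ^ α) (P.map Y) := by
  have hα' : ENNReal.ofReal α ≠ 0 := by simpa using hα
  have hYp : MemLp Y (ENNReal.ofReal α) P := by
    refine (integrable_norm_rpow_iff hY.aestronglyMeasurable hα' ENNReal.ofReal_ne_top).1 ?_
    simpa [ENNReal.toReal_ofReal hα.le] using hmom
  have hid : MemLp id (ENNReal.ofReal α) (P.map Y) :=
    (memLp_map_measure_iff aestronglyMeasurable_id hY.aemeasurable).2 hYp
  have := ((memLp_const (1 : ℝ)).add hid.norm).integrable_norm_rpow hα' ENNReal.ofReal_ne_top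
  refine this.congr (Eventually.of_forall fun y => ?_)
  have h1 : (0 : ℝ) ≤ 1 + |y| := by positivity
  simp only [Pi.add_apply, id, Real.norm_eq_abs, abs_of_nonneg h1, ENNReal.toReal_ofReal hα.le]

lemma integral_abs_sub_integral_le_two_mul_min {Ω : Type*} [MeasurableSpace Ω] {P : Measure Ω}
    [IsProbabilityMeasure P] {f : Ω → ℝ} (hf : Integrable f P) (hf0 : 0 ≤ᵐ[P] f)
    (hf1 : ∀ᵐ ω ∂P, f ω ≤ 1) :
    ∫ ω, |f ω - P[f]| ∂P ≤ 2 * min P[f] (1 - P[f]) := by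
  set p := P[f]
  have hp0 : 0 ≤ p := integral_nonneg_of_ae hf0
  have hp1 : p ≤ 1 := by
    simpa using integral_mono_ae hf (integrable_const 1) hf1
  have hint : Integrable (fun ω => |f ω - p|) P := (hf.sub (integrable_const p)).abs
  rw [mul_min_of_nonneg _ _ zero_le_two]
  refine le_min ?_ ?_
  · calc ∫ ω, |f ω - p| ∂P ≤ ∫ ω, (f ω + p) ∂P := by
          refine integral_mono_ae hint (hf.add (integrable_const p)) ?_
          filter_upwards [hf0] with ω (hω : 0 ≤ f ω)
          exact abs_sub_le_iff.2 ⟨by linarith, by linarith⟩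
      _ = 2 * p := by
          rw [integral_add hf (integrable_const p), integral_const, probReal_univ, one_smul]
          ring
  · calc ∫ ω, |f ω - p| ∂P ≤ ∫ ω, (2 - p - f ω) ∂P := by
          refine integral_mono_ae hint ((integrable_const _).sub hf) ?_
          filter_upwards [hf0, hf1] with ω (hω0 : 0 ≤ f ω) hω1
          exact abs_sub_le_iff.2 ⟨by linarith, by linarith⟩
      _ = 2 * (1 - p) := by
          rw [integral_sub (integrable_const _) hf, integral_const, probReal_univ, one_smul]
          ring

section EmpiricalCDF

variable {Ω : Type*} {X : ℕ → Ω → ℝ}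

lemma empCDF_eq_smul_sum_indicator (n : ℕ) (ω : Ω) (x : ℝ) :
    empCDF n X ω x = (n : ℝ)⁻¹ • ∑ i ∈ Finset.range n, (Iic x).indicator 1 (X i ω) := by
  simp [empCDF, Set.indicator_apply]

lemma empCDF_nonneg (n : ℕ) (ω : Ω) (x : ℝ) : 0 ≤ empCDF n X ω x := by
  rw [empCDF_eq_smul_sum_indicator]
  exact smul_nonneg (by positivity) (Finset.sum_nonneg fun i _ => indicator_nonneg (by simp) _)

lemma empCDF_le_one (n : ℕ) (ω : Ω) (x : ℝ) : empCDF n X ω x ≤ 1 := by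
  rw [empCDF_eq_smul_sum_indicator, smul_eq_mul]
  refine inv_mul_le_one_of_le₀ ?_ n.cast_nonneg
  calc ∑ i ∈ Finset.range n, (Iic x).indicator 1 (X i ω)
      ≤ ∑ i ∈ Finset.range n, (1 : ℝ) :=
        Finset.sum_le_sum fun i _ => indicator_le_self' (by simp) _
    _ = n := by simp

variable [MeasurableSpace Ω] {P : Measure Ω}

lemma measurable_empCDF_uncurry (hmeas : ∀ i, Measurable (X i)) (n : ℕ) :
    Measurable (fun p : Ω × ℝ => empCDF n X p.1 p.2) :=
  Measurable.const_mul (Finset.measurable_sum _ fun i _ =>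
    Measurable.ite (measurableSet_le ((hmeas i).comp measurable_fst) measurable_snd)
      measurable_const measurable_const) _

lemma integrable_empCDF [IsFiniteMeasure P] (hmeas : ∀ i, Measurable (X i)) (n : ℕ) (x : ℝ) :
    Integrable (fun ω => empCDF n X ω x) P :=
  Integrable.of_bound ((measurable_empCDF_uncurry hmeas n).comp
    (measurable_id.prodMk measurable_const)).aestronglyMeasurable 1
    (Eventually.of_forall fun ω => by
      rw [Real.norm_eq_abs, abs_of_nonneg (empCDF_nonneg n ω x)]
      exact empCDF_le_one n ω x)

lemma integrable_indicator_Iic_comp [IsFiniteMeasure P] {Y : Ω → ℝ} (hY : Measurable Y)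
    (x : ℝ) : Integrable (fun ω => (Iic x).indicator (1 : ℝ → ℝ) (Y ω)) P :=
  Integrable.of_bound ((measurable_one.indicator measurableSet_Iic).comp hY).aestronglyMeasurable 1
    (Eventually.of_forall fun ω => by by_cases h : Y ω ≤ x <;> simp [indicator, h])

lemma integral_indicator_Iic_comp {Y : Ω → ℝ} (hY : Measurable Y)
    (x : ℝ) : ∫ ω, (Iic x).indicator 1 (Y ω) ∂P = cdfFun (P.map Y) x := by
  rw [← integral_map hY.aemeasurable
      (measurable_one.indicator measurableSet_Iic).aestronglyMeasurable,
    integral_indicator_one measurableSet_Iic, measureReal_def, cdfFun]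

lemma integral_empCDF [IsFiniteMeasure P] (hmeas : ∀ i, Measurable (X i))
    (hident : ∀ i, IdentDistrib (X i) (X 0) P P) {n : ℕ} (hn : n ≠ 0) (x : ℝ) :
    ∫ ω, empCDF n X ω x ∂P = cdfFun (P.map (X 0)) x := by
  simp_rw [empCDF_eq_smul_sum_indicator, integral_smul,
    integral_finsetSum _ fun i _ => integrable_indicator_Iic_comp (hmeas i) x,
    integral_indicator_Iic_comp (hmeas _), (hident _).map_eq]
  simp [hn]

lemma tendsto_integral_abs_empCDF_sub_cdfFun [IsFiniteMeasure P]
    (hmeas : ∀ i, Measurable (X i)) (hindep : Pairwise fun i j => IndepFun (X i) (X j) P)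
    (hident : ∀ i, IdentDistrib (X i) (X 0) P P) (x : ℝ) :
    Tendsto (fun n => ∫ ω, |empCDF n X ω x - cdfFun (P.map (X 0)) x| ∂P) atTop (𝓝 0) := by
  set φ : ℝ → ℝ := (Iic x).indicator 1
  have hφ : Measurable φ := measurable_one.indicator measurableSet_Iic
  have hφX : MemLp (φ ∘ X 0) 1 P :=
    memLp_one_iff_integrable.2 (integrable_indicator_Iic_comp (hmeas 0) x)
  have hlaw := strong_law_Lp le_rfl ENNReal.one_ne_top (fun i => φ ∘ X i) hφX
    (fun i j hij => (hindep hij).comp hφ hφ) (fun i => (hident i).comp hφ)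
  refine ((ENNReal.tendsto_toReal ENNReal.zero_ne_top).comp hlaw).congr fun n => ?_
  have hmean : P[φ ∘ X 0] = cdfFun (P.map (X 0)) x := integral_indicator_Iic_comp (hmeas 0) x
  have hsm : AEStronglyMeasurable (fun ω => empCDF n X ω x - cdfFun (P.map (X 0)) x) P :=
    (integrable_empCDF hmeas n x).aestronglyMeasurable.sub aestronglyMeasurable_const
  rw [hmean, Function.comp_apply, eLpNorm_one_eq_lintegral_enorm]
  simp_rw [← Real.norm_eq_abs, integral_norm_eq_lintegral_enorm hsm, empCDF_eq_smul_sum_indicator]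
  rfl

lemma integral_abs_empCDF_sub_cdfFun_le [IsProbabilityMeasure P] (hmeas : ∀ i, Measurable (X i))
    (hident : ∀ i, IdentDistrib (X i) (X 0) P P) {n : ℕ} (hn : n ≠ 0) (x : ℝ) :
    ∫ ω, |empCDF n X ω x - cdfFun (P.map (X 0)) x| ∂P
      ≤ 2 * min (cdfFun (P.map (X 0)) x) (1 - cdfFun (P.map (X 0)) x) := by
  simpa only [integral_empCDF hmeas hident hn x] using
    integral_abs_sub_integral_le_two_mul_min (integrable_empCDF (P := P) hmeas n x)
      (Eventually.of_forall fun ω => empCDF_nonneg n ω x)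
      (Eventually.of_forall fun ω => empCDF_le_one n ω x)

end EmpiricalCDF

lemma integrable_prod_of_integral_norm_le {α β E : Type*} [MeasurableSpace α] [MeasurableSpace β]
    [NormedAddCommGroup E] {μ : Measure α} {ν : Measure β} [SFinite μ] [SFinite ν]
    {f : α × β → E} (hf : StronglyMeasurable f) (hsec : ∀ y, Integrable (fun x => f (x, y)) μ)
    {g : β → ℝ} (hg : Integrable g ν) (hfg : ∀ᵐ y ∂ν, ∫ x, ‖f (x, y)‖ ∂μ ≤ g y) :
    Integrable f (μ.prod ν) := by
  refine (integrable_prod_iff' hf.aestronglyMeasurable).2 ⟨Eventually.of_forall hsec, ?_⟩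
  refine hg.mono' hf.norm.integral_prod_left'.aestronglyMeasurable ?_
  filter_upwards [hfg] with y hy
  rwa [Real.norm_eq_abs, abs_of_nonneg (integral_nonneg fun x => norm_nonneg _)]

lemma tendsto_integral_integral_of_dominated {α β E : Type*} [MeasurableSpace α]
    [MeasurableSpace β] [NormedAddCommGroup E] [NormedSpace ℝ E] {μ : Measure α} {ν : Measure β}
    [SFinite μ] [SFinite ν] {f : ℕ → α × β → E} {G : β → E}
    (hf : ∀ n, StronglyMeasurable (f n)) (hsec : ∀ n y, Integrable (fun x => f n (x, y)) μ)
    {g : β → ℝ} (hg : Integrable g ν)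
    (hfg : ∀ᶠ n in atTop, ∀ᵐ y ∂ν, ∫ x, ‖f n (x, y)‖ ∂μ ≤ g y)
    (hlim : ∀ᵐ y ∂ν, Tendsto (fun n => ∫ x, f n (x, y) ∂μ) atTop (𝓝 (G y))) :
    Tendsto (fun n => ∫ x, ∫ y, f n (x, y) ∂ν ∂μ) atTop (𝓝 (∫ y, G y ∂ν)) := by
  have hswap : ∀ᶠ n in atTop, ∫ y, ∫ x, f n (x, y) ∂μ ∂ν = ∫ x, ∫ y, f n (x, y) ∂ν ∂μ := by
    filter_upwards [hfg] with n hn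
    exact (integral_integral_swap (f := fun x y => f n (x, y))
      (integrable_prod_of_integral_norm_le (hf n) (hsec n) hg hn)).symm
  refine Tendsto.congr' hswap (tendsto_integral_filter_of_dominated_convergence g
    (Eventually.of_forall fun n => (hf n).integral_prod_left'.aestronglyMeasurable) ?_ hg hlim)
  filter_upwards [hfg] with n hn
  filter_upwards [hn] with y hy
  exact (norm_integral_le_integral_norm _).trans hy

theorem stmt6_general {Ω : Type*} [MeasurableSpace Ω] (P : Measure Ω) [IsProbabilityMeasure P]
    (X : ℕ → Ω → ℝ) (hmeas : ∀ i, Measurable (X i))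
    (hindep : iIndepFun X P)
    (hident : ∀ i, P.map (X i) = P.map (X 0))
    (α : ℝ) (hα1 : 1 < α)
    (hmom : Integrable (fun ω => |X 0 ω| ^ α) P) :
    Tendsto (fun n => ∫ ω, (∫ x, |empCDF n X ω x - cdfFun (P.map (X 0)) x|) ∂P)
      atTop (nhds 0) := by
  set μ := P.map (X 0)
  have : IsProbabilityMeasure μ := Measure.isProbabilityMeasure_map (hmeas 0).aemeasurable
  have hidentDistrib (i : ℕ) : IdentDistrib (X i) (X 0) P P :=
    ⟨(hmeas i).aemeasurable, (hmeas 0).aemeasurable, hident i⟩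
  set g : ℝ → ℝ := fun x => 2 * (∫ y, (1 + |y|) ^ α ∂μ) * (1 + |x|) ^ (-α)
  have hg : Integrable g := (integrable_one_add_norm (E := ℝ) (by simpa using hα1)).const_mul _
  have hbound {n : ℕ} (hn : n ≠ 0) (x : ℝ) :
      ∫ ω, |empCDF n X ω x - cdfFun μ x| ∂P ≤ g x := by
    have htail := min_cdfFun_le_integral_mul_rpow_neg μ (by linarith)
      (integrable_one_add_abs_rpow_map (hmeas 0) (by linarith) hmom) x
    have hdev := integral_abs_empCDF_sub_cdfFun_le hmeas hidentDistrib hn x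
    simp only [g]
    linarith
  simpa using tendsto_integral_integral_of_dominated (G := fun _ => (0 : ℝ))
    (f := fun n p => |empCDF n X p.1 p.2 - cdfFun μ p.2|)
    (fun n => ((measurable_empCDF_uncurry hmeas n).sub
      ((measurable_cdfFun μ).comp measurable_snd)).abs.stronglyMeasurable)
    (fun n x => ((integrable_empCDF (P := P) hmeas n x).sub (integrable_const (cdfFun μ x))).abs) hg
    (by
      filter_upwards [eventually_ne_atTop 0] with n hn
      exact Eventually.of_forall fun x => by simpa using hbound hn x)
    (Eventually.of_forall (tendsto_integral_abs_empCDF_sub_cdfFun hmeas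
      (fun i j hij => hindep.indepFun hij) hidentDistrib))

/-- For i.i.d. `X_i` with `E[|X₁|^α] < ∞` for some `α ∈ (1,2)`, the expected
Wasserstein-1 distance `E[d₁(F_n, F)] = E[∫ |F_n(x) - F(x)| dx]` between the
empirical distribution and the true distribution tends to `0` as `n → ∞`. -/
theorem stmt6 {Ω : Type*} [MeasurableSpace Ω] (P : Measure Ω) [IsProbabilityMeasure P]
    (X : ℕ → Ω → ℝ) (hmeas : ∀ i, Measurable (X i))
    (hindep : iIndepFun X P)
    (hident : ∀ i, P.map (X i) = P.map (X 0))
    (α : ℝ) (hα1 : 1 < α) (hα2 : α < 2)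
    (hmom : Integrable (fun ω => |X 0 ω| ^ α) P) :
    Tendsto (fun n => ∫ ω, (∫ x, |empCDF n X ω x - cdfFun (P.map (X 0)) x|) ∂P)
      atTop (nhds 0) :=
  stmt6_general P X hmeas hindep hident α hα1 hmom
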